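/- Let {R,F} be a compatible pair of R-matrices on V⊗V, V = ℂ^N, let A be an associative unital ℂ-algebra, let η ∈ ℂ∖{0}, and let L, M ∈ Mat_N(A) satisfy: (i) R₁ M_{1̄} M_{2̄} = M_{1̄} M_{2̄} R₁; (ii) R₁L₁R₁L₁ = L₁R₁L₁R₁; (iii) R₁L₁R₁M₁ = η·M₁L_{2̄}, where the copies are X_{1̄} = X₁ and X_{k+1‾} = F_k X_{k̄} F_k⁻¹. Then for every p ≥ 1 the following identity holds in Mat_{N^{p+1}}(A): L₁ · R_{1→p} · M_{1̄} M_{2̄} ⋯ M_{p̄} = η^p · R⁻¹_{1→p} · M_{1̄} M_{2̄} ⋯ M_{p̄} · L_{p+1‾}, where R_{1→p} = R₁R₂⋯R_p and R⁻¹_{1→p} = R₁⁻¹R₂⁻¹⋯R_p⁻¹. -/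

import Mathlib

open Matrix BigOperators

/-- `X₁ = X ⊗ id` acting on the factors 1,2 of `(ℂ^N)^{⊗3}`. -/
noncomputable def up12 {N : ℕ} (X : Matrix (Fin N × Fin N) (Fin N × Fin N) ℂ) :
    Matrix (Fin N × Fin N × Fin N) (Fin N × Fin N × Fin N) ℂ :=
  Matrix.of fun p q => X (p.1, p.2.1) (q.1, q.2.1) * (if p.2.2 = q.2.2 then 1 else 0)

/-- `X₂ = id ⊗ X` acting on the factors 2,3 of `(ℂ^N)^{⊗3}`. -/
noncomputable def up23 {N : ℕ} (X : Matrix (Fin N × Fin N) (Fin N × Fin N) ℂ) :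
    Matrix (Fin N × Fin N × Fin N) (Fin N × Fin N × Fin N) ℂ :=
  Matrix.of fun p q => (if p.1 = q.1 then 1 else 0) * X (p.2.1, p.2.2) (q.2.1, q.2.2)

/-- `X₁ = X ⊗ I_N` on two tensor factors, for a matrix over an algebra `A`. -/
def lift1 {N : ℕ} {A : Type} [Ring A] (X : Matrix (Fin N) (Fin N) A) :
    Matrix (Fin N × Fin N) (Fin N × Fin N) A :=
  Matrix.of fun p q => X p.1 q.1 * (if p.2 = q.2 then 1 else 0)

/-- A matrix `X ∈ Mat_N(A)` placed in the (0-indexed) tensor factor `p`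
of `V^{⊗k}`, acting as the identity elsewhere. -/
def liftV {N : ℕ} {A : Type} [Ring A] (k : ℕ) (X : Matrix (Fin N) (Fin N) A)
    (p : ℕ) : Matrix (Fin k → Fin N) (Fin k → Fin N) A :=
  Matrix.of fun v w =>
    if h : p < k then
      X (v ⟨p, h⟩) (w ⟨p, h⟩) *
        (if ∀ j : Fin k, (j : ℕ) ≠ p → v j = w j then 1 else 0)
    else (if v = w then 1 else 0)

/-- A matrix `X ∈ Mat_{N²}(A)` placed in the (0-indexed) tensor factors
`p, p+1` of `V^{⊗k}`; this is the operator `X_{p+1}` in 1-indexed notation. -/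
def lift2 {N : ℕ} {A : Type} [Ring A] (k : ℕ)
    (X : Matrix (Fin N × Fin N) (Fin N × Fin N) A) (p : ℕ) :
    Matrix (Fin k → Fin N) (Fin k → Fin N) A :=
  Matrix.of fun v w =>
    if h : p + 1 < k then
      X (v ⟨p, Nat.lt_of_succ_lt h⟩, v ⟨p + 1, h⟩)
          (w ⟨p, Nat.lt_of_succ_lt h⟩, w ⟨p + 1, h⟩) *
        (if ∀ j : Fin k, (j : ℕ) ≠ p → (j : ℕ) ≠ p + 1 → v j = w j then 1 else 0)
    else (if v = w then 1 else 0)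

/-- The `F`-copies of a matrix `X` in `Mat_{N^k}(A)`:
`X_{1̄} = X₁` and `X_{n+2‾} = F_{n+1} X_{n+1‾} F_{n+1}⁻¹`. -/
def copies {N : ℕ} {A : Type} [Ring A] (k : ℕ)
    (FA FinvA : Matrix (Fin N × Fin N) (Fin N × Fin N) A)
    (X : Matrix (Fin N) (Fin N) A) :
    ℕ → Matrix (Fin k → Fin N) (Fin k → Fin N) A
  | 0 => liftV k X 0
  | n + 1 => lift2 k FA n * copies k FA FinvA X n * lift2 k FinvA n

/-- The ordered product of copies `X_{1̄} X_{2̄} ⋯ X_{n+1‾}`. -/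
def copiesProd {N : ℕ} {A : Type} [Ring A] (k : ℕ)
    (FA FinvA : Matrix (Fin N × Fin N) (Fin N × Fin N) A)
    (X : Matrix (Fin N) (Fin N) A) :
    ℕ → Matrix (Fin k → Fin N) (Fin k → Fin N) A
  | 0 => copies k FA FinvA X 0
  | n + 1 => copiesProd k FA FinvA X n * copies k FA FinvA X (n + 1)

/-- The ascending product `R_{1→(n+1)} = R₁R₂⋯R_{n+1}` in `Mat_{N^k}(A)`. -/
def RupProd {N : ℕ} {A : Type} [Ring A] (k : ℕ)
    (RA : Matrix (Fin N × Fin N) (Fin N × Fin N) A) :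
    ℕ → Matrix (Fin k → Fin N) (Fin k → Fin N) A
  | 0 => lift2 k RA 0
  | n + 1 => RupProd k RA n * lift2 k RA (n + 1)

/-!
Conjugation by `F_j F_{j+1}` moves every copy `X_{j̄}` to `X_{j+1‾}` (for the copy `X_{j+1‾}`
itself this is the braid relation of `F`) and, by compatibility, `R_j` to `R_{j+1}`. Hence the
relation `L_{1̄} R₁ M_{1̄} = η R₁⁻¹ M_{1̄} L_{2̄}`, which is (iii) multiplied by `R₁⁻¹`, propagates to
`L_{j̄} R_j M_{j̄} = η R_j⁻¹ M_{j̄} L_{j+1‾}` for every `j`. As `M_{1̄} ⋯ M_{j̄}` lives on the first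
`j` tensor factors it commutes with `R_{j+1}^{±1}`, so the identity follows by induction on `p`,
applying this relation to one factor `R_p M_{p̄}` at a time.
-/

open Function

open Classical in
/-- `X` acting on the tensor factors `σ κ` of `β^{⊗ι}` and as the identity on the others. -/
noncomputable def liftAt {ι κ β A : Type*} [Zero A] (σ : κ → ι) (X : Matrix (κ → β) (κ → β) A) :
    Matrix (ι → β) (ι → β) A :=
  Matrix.of fun v w => if ∀ i ∉ Set.range σ, v i = w i then X (v ∘ σ) (w ∘ σ) else 0

section LiftAt

variable {ι κ β A : Type*} [Semiring A]

theorem liftAt_apply (σ : κ → ι) (X : Matrix (κ → β) (κ → β) A) (v w : ι → β)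
    [Decidable (∀ i ∉ Set.range σ, v i = w i)] :
    liftAt σ X v w = if ∀ i ∉ Set.range σ, v i = w i then X (v ∘ σ) (w ∘ σ) else 0 := by
  simp only [liftAt, Matrix.of_apply]; congr

theorem liftAt_one [Fintype ι] [DecidableEq ι] [Fintype κ] [DecidableEq κ] [DecidableEq β]
    (σ : κ → ι) :
    liftAt σ (1 : Matrix (κ → β) (κ → β) A) = 1 := by
  classical
  ext v w
  rw [liftAt_apply, Matrix.one_apply, Matrix.one_apply]
  by_cases hvw : v = w
  · simp [hvw]
  · rw [if_neg hvw, ite_eq_right_iff, ite_eq_right_iff]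
    refine fun hoff hσ => absurd (funext fun i => ?_) hvw
    by_cases hi : i ∈ Set.range σ
    · obtain ⟨a, rfl⟩ := hi
      exact congrFun hσ a
    · exact hoff i hi

theorem eq_extend_of_eqOn_compl_range {σ : κ → ι} (hσ : Injective σ) {v w : ι → β}
    (h : ∀ i ∉ Set.range σ, v i = w i) : w = extend σ (w ∘ σ) v := by
  funext i
  by_cases hi : i ∈ Set.range σ
  · obtain ⟨a, rfl⟩ := hi
    exact (hσ.extend_apply (w ∘ σ) v a).symm
  · rw [extend_apply' _ _ i hi, h i hi]

theorem liftAt_mul [Fintype ι] [DecidableEq ι] [Fintype κ] [DecidableEq κ] [Fintype β]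
    {σ : κ → ι} (hσ : Injective σ) (X Y : Matrix (κ → β) (κ → β) A) :
    liftAt σ X * liftAt σ Y = liftAt σ (X * Y) := by
  classical
  ext v u
  simp only [Matrix.mul_apply, liftAt_apply]
  have hoff (g : κ → β) : ∀ i ∉ Set.range σ, v i = extend σ g v i :=
    fun i hi => (extend_apply' g v i hi).symm
  have hiff (g : κ → β) : (∀ i ∉ Set.range σ, extend σ g v i = u i) ↔
      ∀ i ∉ Set.range σ, v i = u i :=
    forall₂_congr fun i hi => by rw [← hoff g i hi]
  -- only the `w` that agree with `v` off `σ`, i.e. `w = extend σ g v`, contribute to the sum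
  rw [← Fintype.sum_of_injective (fun g => extend σ g v) (extend_injective hσ v)
    (fun g => X (v ∘ σ) g * if ∀ i ∉ Set.range σ, v i = u i then Y g (u ∘ σ) else 0)]
  · split_ifs <;> simp
  · intro w hw
    rw [if_neg fun h => hw ⟨w ∘ σ, (eq_extend_of_eqOn_compl_range hσ h).symm⟩, zero_mul]
  · intro g
    simp only [if_pos (hoff g), if_congr (hiff g) rfl rfl, extend_comp hσ]

theorem liftAt_mul_apply_of_disjoint [Fintype ι] [DecidableEq ι] [Fintype β] {κ' : Type*}
    {σ : κ → ι} {τ : κ' → ι} (hσ : Injective σ) (hd : Disjoint (Set.range σ) (Set.range τ))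
    (X : Matrix (κ → β) (κ → β) A) (Y : Matrix (κ' → β) (κ' → β) A) (v u : ι → β)
    [Decidable (∀ i ∉ Set.range σ, i ∉ Set.range τ → v i = u i)] :
    (liftAt σ X * liftAt τ Y) v u = if ∀ i ∉ Set.range σ, i ∉ Set.range τ → v i = u i
      then X (v ∘ σ) (u ∘ σ) * Y (v ∘ τ) (u ∘ τ) else 0 := by
  classical
  have hστ : ∀ a, σ a ∉ Set.range τ := fun a => hd.notMem_of_mem_left ⟨a, rfl⟩
  set w₀ := extend σ (u ∘ σ) v
  have hw₀ : ∀ i ∉ Set.range σ, w₀ i = v i := fun i hi => extend_apply' _ _ i hi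
  have hw₀τ : w₀ ∘ τ = v ∘ τ :=
    funext fun b => hw₀ _ (Disjoint.notMem_of_mem_right hd ⟨b, rfl⟩)
  simp only [Matrix.mul_apply, liftAt_apply]
  rw [Fintype.sum_eq_single w₀]
  · have hiff : (∀ i ∉ Set.range τ, w₀ i = u i) ↔
        ∀ i ∉ Set.range σ, i ∉ Set.range τ → v i = u i := by
      refine ⟨fun h i hσi hτi => hw₀ i hσi ▸ h i hτi, fun h i hτi => ?_⟩
      by_cases hσi : i ∈ Set.range σ
      · obtain ⟨a, rfl⟩ := hσi
        exact hσ.extend_apply _ _ a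
      · rw [hw₀ i hσi]; exact h i hσi hτi
    rw [if_pos fun i hi => (hw₀ i hi).symm, if_congr hiff rfl rfl, extend_comp hσ, hw₀τ]
    split_ifs <;> simp
  · intro w hw
    split_ifs with hvw hwu
    · refine absurd ?_ hw
      rw [eq_extend_of_eqOn_compl_range hσ hvw]
      congr 1
      exact funext fun a => hwu _ (hστ a)
    all_goals simp

theorem commute_liftAt [Fintype ι] [DecidableEq ι] [Fintype β] {κ' : Type*}
    {σ : κ → ι} {τ : κ' → ι} (hσ : Injective σ) (hτ : Injective τ)
    (hd : Disjoint (Set.range σ) (Set.range τ))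
    {X : Matrix (κ → β) (κ → β) A} {Y : Matrix (κ' → β) (κ' → β) A}
    (hXY : ∀ a b c d, Commute (X a b) (Y c d)) :
    Commute (liftAt σ X) (liftAt τ Y) := by
  classical
  ext v u
  rw [liftAt_mul_apply_of_disjoint hσ hd, liftAt_mul_apply_of_disjoint hτ hd.symm]
  refine if_congr ⟨fun h i hτi hσi => h i hσi hτi, fun h i hσi hτi => h i hτi hσi⟩
    (hXY _ _ _ _).eq rfl

theorem liftAt_liftAt {κ' : Type*} {σ : κ → ι} (hσ : Injective σ) (τ : κ' → κ)
    (X : Matrix (κ' → β) (κ' → β) A) : liftAt σ (liftAt τ X) = liftAt (σ ∘ τ) X := by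
  classical
  ext v w
  simp only [liftAt_apply, ← ite_and]
  refine if_congr ⟨fun ⟨hσv, hτv⟩ i hi => ?_, fun h => ⟨fun i hi => h i ?_, fun a ha => h _ ?_⟩⟩
    rfl rfl
  · by_cases hσi : i ∈ Set.range σ
    · obtain ⟨a, rfl⟩ := hσi
      exact hτv a fun ⟨b, hb⟩ => hi ⟨b, congrArg σ hb⟩
    · exact hσv i hσi
  · exact fun ⟨b, hb⟩ => hi ⟨τ b, hb⟩
  · exact fun ⟨b, hb⟩ => ha ⟨b, hσ hb⟩

end LiftAt

def window (p : ℕ) {n k : ℕ} (h : p + n ≤ k) : Fin n → Fin k := fun i => ⟨p + i, by omega⟩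

section Window

variable {p n k : ℕ}

theorem window_injective (h : p + n ≤ k) : Injective (window p h) :=
  fun i j hij => Fin.ext (by simpa [window] using hij)

theorem mem_range_window (h : p + n ≤ k) (i : Fin k) :
    i ∈ Set.range (window p h) ↔ p ≤ i ∧ (i : ℕ) < p + n := by
  refine ⟨fun ⟨j, hj⟩ => hj ▸ ⟨Nat.le_add_right _ _, by simp [window]⟩, fun ⟨h1, h2⟩ => ?_⟩
  exact ⟨⟨i - p, by omega⟩, Fin.ext (by simp [window]; omega)⟩

theorem disjoint_range_window {q m : ℕ} (h : p + n ≤ k) (h' : q + m ≤ k) (hpq : p + n ≤ q) :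
    Disjoint (Set.range (window p h)) (Set.range (window q h')) :=
  Set.disjoint_left.2 fun i hi hi' => by
    rw [mem_range_window] at hi hi'
    omega

theorem window_comp_window {q m : ℕ} (h : p + n ≤ k) (h' : q + m ≤ n) :
    window p h ∘ window q h' = window (p + q) (by omega : p + q + m ≤ k) := by
  funext i
  exact Fin.ext (Nat.add_assoc p q i).symm

end Window

section Lift

variable {N k p : ℕ} {A : Type} [Ring A]

theorem liftV_eq_liftAt (h : p < k) (X : Matrix (Fin N) (Fin N) A) :
    liftV k X p = liftAt (window p (by omega : p + 1 ≤ k))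
      (X.submatrix (Equiv.funUnique (Fin 1) (Fin N)) (Equiv.funUnique (Fin 1) (Fin N))) := by
  classical
  ext v w
  simp [liftV, liftAt_apply, dif_pos h, window, Fin.ext_iff, eq_comm]

theorem lift2_eq_liftAt (h : p + 1 < k) (X : Matrix (Fin N × Fin N) (Fin N × Fin N) A) :
    lift2 k X p = liftAt (window p (by omega : p + 2 ≤ k))
      (X.submatrix (finTwoArrowEquiv (Fin N)) (finTwoArrowEquiv (Fin N))) := by
  classical
  ext v w
  simp [lift2, liftAt_apply, dif_pos h, window, Fin.ext_iff, eq_comm]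

theorem lift2_of_not_lt (h : ¬ p + 1 < k) (X : Matrix (Fin N × Fin N) (Fin N × Fin N) A) :
    lift2 k X p = 1 := by
  ext v w
  simp only [lift2, Matrix.of_apply, dif_neg h, Matrix.one_apply]

theorem lift2_mul (X Y : Matrix (Fin N × Fin N) (Fin N × Fin N) A) :
    lift2 k X p * lift2 k Y p = lift2 k (X * Y) p := by
  by_cases h : p + 1 < k
  · rw [lift2_eq_liftAt h, lift2_eq_liftAt h, lift2_eq_liftAt h,
      liftAt_mul (window_injective _), Matrix.submatrix_mul_equiv]
  · simp only [lift2_of_not_lt h, mul_one]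

theorem lift2_one : lift2 k (1 : Matrix (Fin N × Fin N) (Fin N × Fin N) A) p = 1 := by
  by_cases h : p + 1 < k
  · rw [lift2_eq_liftAt h, Matrix.submatrix_one_equiv, liftAt_one]
  · exact lift2_of_not_lt h 1

theorem lift2_mul_eq_one {X Y : Matrix (Fin N × Fin N) (Fin N × Fin N) A} (hXY : X * Y = 1) :
    lift2 k X p * lift2 k Y p = 1 := by
  rw [lift2_mul, hXY, lift2_one]

theorem lift2_smul {S : Type*} [SMul S A] [IsScalarTower S A A] (h : p + 1 < k) (c : S)
    (X : Matrix (Fin N × Fin N) (Fin N × Fin N) A) : lift2 k (c • X) p = c • lift2 k X p := by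
  ext v w
  simp only [lift2, Matrix.of_apply, dif_pos h, Matrix.smul_apply, smul_mul_assoc]

theorem commute_lift2 {q : ℕ} (hpq : p + 1 < q) {X Y : Matrix (Fin N × Fin N) (Fin N × Fin N) A}
    (hXY : ∀ a b c d, Commute (X a b) (Y c d)) : Commute (lift2 k X p) (lift2 k Y q) := by
  by_cases hq : q + 1 < k
  · rw [lift2_eq_liftAt (by omega), lift2_eq_liftAt hq]
    exact commute_liftAt (window_injective _) (window_injective _)
      (disjoint_range_window _ _ (by omega)) fun _ _ _ _ => hXY _ _ _ _
  · rw [lift2_of_not_lt hq]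
    exact Commute.one_right _

theorem commute_liftV_lift2 {q : ℕ} (hpq : p < q) {X : Matrix (Fin N) (Fin N) A}
    {Y : Matrix (Fin N × Fin N) (Fin N × Fin N) A} (hXY : ∀ a b c d, Commute (X a b) (Y c d)) :
    Commute (liftV k X p) (lift2 k Y q) := by
  by_cases hq : q + 1 < k
  · rw [liftV_eq_liftAt (by omega), lift2_eq_liftAt hq]
    exact commute_liftAt (window_injective _) (window_injective _)
      (disjoint_range_window _ _ (by omega)) fun _ _ _ _ => hXY _ _ _ _
  · rw [lift2_of_not_lt hq]
    exact Commute.one_right _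

theorem lift1_submatrix (X : Matrix (Fin N) (Fin N) A) :
    (lift1 X).submatrix (finTwoArrowEquiv (Fin N)) (finTwoArrowEquiv (Fin N)) =
      liftAt (window 0 (by omega : 0 + 1 ≤ 2))
        (X.submatrix (Equiv.funUnique (Fin 1) (Fin N)) (Equiv.funUnique (Fin 1) (Fin N))) := by
  classical
  ext f g
  simp [lift1, liftAt_apply, Fin.forall_fin_two, window]

theorem lift2_lift1 (h : p + 1 < k) (X : Matrix (Fin N) (Fin N) A) :
    lift2 k (lift1 X) p = liftV k X p := by
  rw [lift2_eq_liftAt h, lift1_submatrix, liftAt_liftAt (window_injective _), window_comp_window,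
    liftV_eq_liftAt (by omega)]
  rfl

end Lift

@[simps]
def finThreeArrowEquiv (α : Type*) : (Fin 3 → α) ≃ α × α × α where
  toFun f := (f 0, f 1, f 2)
  invFun x := ![x.1, x.2.1, x.2.2]
  left_inv f := by ext i; fin_cases i <;> rfl
  right_inv x := rfl

section Braid

variable {N k p : ℕ} {A : Type} [Ring A]

theorem up12_map_submatrix (φ : ℂ →+* A) (X : Matrix (Fin N × Fin N) (Fin N × Fin N) ℂ) :
    ((up12 X).map φ).submatrix (finThreeArrowEquiv (Fin N)) (finThreeArrowEquiv (Fin N)) =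
      liftAt (window 0 (by omega : 0 + 2 ≤ 3))
        ((X.map φ).submatrix (finTwoArrowEquiv (Fin N)) (finTwoArrowEquiv (Fin N))) := by
  classical
  ext f g
  simp [up12, liftAt_apply, Fin.forall_fin_succ, window, apply_ite φ]

theorem up23_map_submatrix (φ : ℂ →+* A) (X : Matrix (Fin N × Fin N) (Fin N × Fin N) ℂ) :
    ((up23 X).map φ).submatrix (finThreeArrowEquiv (Fin N)) (finThreeArrowEquiv (Fin N)) =
      liftAt (window 1 (by omega : 1 + 2 ≤ 3))
        ((X.map φ).submatrix (finTwoArrowEquiv (Fin N)) (finTwoArrowEquiv (Fin N))) := by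
  classical
  ext f g
  simp [up23, liftAt_apply, Fin.forall_fin_succ, window, apply_ite φ]

theorem lift2_braid (h : p + 2 < k) (φ : ℂ →+* A)
    {X Y Z X' Y' Z' : Matrix (Fin N × Fin N) (Fin N × Fin N) ℂ}
    (hXYZ : up12 X * up23 Y * up12 Z = up23 X' * up12 Y' * up23 Z') :
    lift2 k (X.map φ) p * lift2 k (Y.map φ) (p + 1) * lift2 k (Z.map φ) p =
      lift2 k (X'.map φ) (p + 1) * lift2 k (Y'.map φ) p * lift2 k (Z'.map φ) (p + 1) := by
  let Φ : Matrix (Fin N × Fin N × Fin N) (Fin N × Fin N × Fin N) ℂ →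
      Matrix (Fin k → Fin N) (Fin k → Fin N) A := fun W =>
    liftAt (window p (by omega : p + 3 ≤ k))
      ((W.map φ).submatrix (finThreeArrowEquiv (Fin N)) (finThreeArrowEquiv (Fin N)))
  have hΦ_mul (W W' : Matrix (Fin N × Fin N × Fin N) (Fin N × Fin N × Fin N) ℂ) :
      Φ (W * W') = Φ W * Φ W' := by
    simp only [Φ, Matrix.map_mul]
    rw [liftAt_mul (window_injective _), Matrix.submatrix_mul_equiv]
  have hΦ12 (W : Matrix (Fin N × Fin N) (Fin N × Fin N) ℂ) :
      Φ (up12 W) = lift2 k (W.map φ) p := by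
    simp only [Φ, up12_map_submatrix, liftAt_liftAt (window_injective _), window_comp_window,
      lift2_eq_liftAt (by omega : p + 1 < k)]
    rfl
  have hΦ23 (W : Matrix (Fin N × Fin N) (Fin N × Fin N) ℂ) :
      Φ (up23 W) = lift2 k (W.map φ) (p + 1) := by
    simp only [Φ, up23_map_submatrix, liftAt_liftAt (window_injective _), window_comp_window,
      lift2_eq_liftAt (by omega : p + 1 + 1 < k)]
  simpa only [hΦ_mul, hΦ12, hΦ23] using congrArg Φ hXYZ

end Braid

section Copies

variable {N k : ℕ} {A : Type} [Ring A] {FA FinvA : Matrix (Fin N × Fin N) (Fin N × Fin N) A}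

variable (k) in
def lift2Unit {X Y : Matrix (Fin N × Fin N) (Fin N × Fin N) A} (hXY : X * Y = 1)
    (hYX : Y * X = 1) (p : ℕ) : (Matrix (Fin k → Fin N) (Fin k → Fin N) A)ˣ :=
  ⟨lift2 k X p, lift2 k Y p, lift2_mul_eq_one hXY, lift2_mul_eq_one hYX⟩

theorem commute_copies_lift2 {Y : Matrix (Fin N × Fin N) (Fin N × Fin N) A}
    (hY : ∀ a b c, Commute (Y a b) c) (X : Matrix (Fin N) (Fin N) A) {n m : ℕ} (hnm : n < m) :
    Commute (copies k FA FinvA X n) (lift2 k Y m) := by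
  have hY' : ∀ (Z : Matrix (Fin N × Fin N) (Fin N × Fin N) A) a b c d,
      Commute (Z a b) (Y c d) := fun _ _ _ c d => (hY c d _).symm
  induction n with
  | zero => exact commute_liftV_lift2 hnm fun _ _ c d => (hY c d _).symm
  | succ n ih =>
    exact ((commute_lift2 (by omega) (hY' FA)).mul_left (ih (by omega))).mul_left
      (commute_lift2 (by omega) (hY' FinvA))

theorem commute_copiesProd_lift2 {Y : Matrix (Fin N × Fin N) (Fin N × Fin N) A}
    (hY : ∀ a b c, Commute (Y a b) c) (X : Matrix (Fin N) (Fin N) A) {n m : ℕ} (hnm : n < m) :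
    Commute (copiesProd k FA FinvA X n) (lift2 k Y m) := by
  induction n with
  | zero => exact commute_copies_lift2 hY X hnm
  | succ n ih => exact (ih (by omega)).mul_left (commute_copies_lift2 hY X hnm)

theorem semiconjBy_lift2_copies (hF : FinvA * FA = 1) (X : Matrix (Fin N) (Fin N) A) (n : ℕ) :
    SemiconjBy (lift2 k FA n) (copies k FA FinvA X n) (copies k FA FinvA X (n + 1)) := by
  rw [SemiconjBy, copies, mul_assoc _ (lift2 k FinvA n), lift2_mul_eq_one hF, mul_one]

theorem semiconjBy_lift2_pair_copies (hFc : ∀ a b c, Commute (FA a b) c) (hF : FinvA * FA = 1)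
    (X : Matrix (Fin N) (Fin N) A) (n : ℕ) :
    SemiconjBy (lift2 k FA n * lift2 k FA (n + 1)) (copies k FA FinvA X n)
      (copies k FA FinvA X (n + 1)) :=
  (semiconjBy_lift2_copies hF X n).mul_left (commute_copies_lift2 hFc X n.lt_succ_self).symm

theorem semiconjBy_lift2_pair_copies_succ (hFc : ∀ a b c, Commute (FA a b) c)
    (hFFi : FA * FinvA = 1) (hFiF : FinvA * FA = 1) {n : ℕ}
    (hYB : lift2 k FA n * lift2 k FA (n + 1) * lift2 k FA n =
      lift2 k FA (n + 1) * lift2 k FA n * lift2 k FA (n + 1))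
    (X : Matrix (Fin N) (Fin N) A) :
    SemiconjBy (lift2 k FA n * lift2 k FA (n + 1)) (copies k FA FinvA X (n + 1))
      (copies k FA FinvA X (n + 2)) := by
  set f := lift2 k FA n
  set g := lift2 k FA (n + 1)
  have h0 : f * copies k FA FinvA X n = copies k FA FinvA X (n + 1) * f :=
    semiconjBy_lift2_copies hFiF X n
  have h1 : g * copies k FA FinvA X (n + 1) = copies k FA FinvA X (n + 2) * g :=
    semiconjBy_lift2_copies hFiF X (n + 1)
  have hg : g * copies k FA FinvA X n = copies k FA FinvA X n * g :=
    (commute_copies_lift2 hFc X n.lt_succ_self).symm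
  -- after right multiplication by `f`, both sides reduce to `copies X (n + 2) * (g * f * g)`
  rw [SemiconjBy, ← (lift2Unit k hFFi hFiF n).mul_left_inj]
  change f * g * copies k FA FinvA X (n + 1) * f = copies k FA FinvA X (n + 2) * (f * g) * f
  calc f * g * copies k FA FinvA X (n + 1) * f
      = f * g * f * copies k FA FinvA X n := by simp only [mul_assoc, h0]
    _ = g * f * copies k FA FinvA X n * g := by rw [hYB]; simp only [mul_assoc, hg]
    _ = copies k FA FinvA X (n + 2) * (g * f * g) := by
        rw [mul_assoc g f, h0, ← mul_assoc g, h1]; simp only [mul_assoc]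
    _ = copies k FA FinvA X (n + 2) * (f * g) * f := by rw [← hYB]; simp only [mul_assoc]

end Copies

section Relation

variable {N k : ℕ} {A S : Type} [Ring A] [CommSemiring S] [Algebra S A]
  {FA FinvA RA RinvA : Matrix (Fin N × Fin N) (Fin N × Fin N) A}

theorem copies_mul_lift2_mul_copies_zero (hk : 1 < k) (hRiR : RinvA * RA = 1) (c : S)
    {L M : Matrix (Fin N) (Fin N) A}
    (h : RA * lift1 L * RA * lift1 M = c • (lift1 M * (FA * lift1 L * FinvA))) :
    copies k FA FinvA L 0 * lift2 k RA 0 * copies k FA FinvA M 0 =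
      c • (lift2 k RinvA 0 * copies k FA FinvA M 0 * copies k FA FinvA L 1) := by
  have h' := congrArg (lift2 k · 0) h
  simp only [← lift2_mul, lift2_smul (by omega : 0 + 1 < k), lift2_lift1 (by omega : 0 + 1 < k)]
    at h'
  simp only [copies]
  calc liftV k L 0 * lift2 k RA 0 * liftV k M 0
      = lift2 k RinvA 0 * (lift2 k RA 0 * liftV k L 0 * lift2 k RA 0 * liftV k M 0) := by
        simp only [← mul_assoc, lift2_mul_eq_one hRiR, one_mul]
    _ = c • (lift2 k RinvA 0 * liftV k M 0 * (lift2 k FA 0 * liftV k L 0 * lift2 k FinvA 0)) := by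
        rw [h', mul_smul_comm]; simp only [mul_assoc]

theorem copies_mul_lift2_mul_copies_succ (hFc : ∀ a b c, Commute (FA a b) c)
    (hFFi : FA * FinvA = 1) (hFiF : FinvA * FA = 1) (hRRi : RA * RinvA = 1)
    (hRiR : RinvA * RA = 1) {j : ℕ}
    (hYB : lift2 k FA j * lift2 k FA (j + 1) * lift2 k FA j =
      lift2 k FA (j + 1) * lift2 k FA j * lift2 k FA (j + 1))
    (hFR : lift2 k FA j * lift2 k FA (j + 1) * lift2 k RA j =
      lift2 k RA (j + 1) * lift2 k FA j * lift2 k FA (j + 1))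
    (c : S) {L M : Matrix (Fin N) (Fin N) A}
    (hj : copies k FA FinvA L j * lift2 k RA j * copies k FA FinvA M j =
      c • (lift2 k RinvA j * copies k FA FinvA M j * copies k FA FinvA L (j + 1))) :
    copies k FA FinvA L (j + 1) * lift2 k RA (j + 1) * copies k FA FinvA M (j + 1) =
      c • (lift2 k RinvA (j + 1) * copies k FA FinvA M (j + 1) *
        copies k FA FinvA L (j + 2)) := by
  have hG : IsUnit (lift2 k FA j * lift2 k FA (j + 1)) :=
    (lift2Unit k hFFi hFiF j).isUnit.mul (lift2Unit k hFFi hFiF (j + 1)).isUnit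
  have hR : SemiconjBy (lift2 k FA j * lift2 k FA (j + 1)) (lift2 k RA j)
      (lift2 k RA (j + 1)) := by
    rw [SemiconjBy, hFR, mul_assoc]
  have hRi : SemiconjBy (lift2 k FA j * lift2 k FA (j + 1)) (lift2 k RinvA j)
      (lift2 k RinvA (j + 1)) :=
    SemiconjBy.units_inv_right (x := lift2Unit k hRRi hRiR j)
      (y := lift2Unit k hRRi hRiR (j + 1)) hR
  have hL := semiconjBy_lift2_pair_copies (k := k) hFc hFiF L j
  have hL' := semiconjBy_lift2_pair_copies_succ hFc hFFi hFiF hYB L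
  have hM := semiconjBy_lift2_pair_copies (k := k) hFc hFiF M j
  have hlhs := (hL.mul_right hR).mul_right hM
  have hrhs := ((hRi.mul_right hM).mul_right hL').smul_right c
  rw [hj] at hlhs
  exact hG.mul_left_inj.mp (hlhs.eq.symm.trans hrhs.eq)

theorem copies_mul_lift2_mul_copies (hFc : ∀ a b c, Commute (FA a b) c)
    (hFFi : FA * FinvA = 1) (hFiF : FinvA * FA = 1) (hRRi : RA * RinvA = 1) (hRiR : RinvA * RA = 1)
    (hYB : ∀ j, j + 2 < k → lift2 k FA j * lift2 k FA (j + 1) * lift2 k FA j =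
      lift2 k FA (j + 1) * lift2 k FA j * lift2 k FA (j + 1))
    (hFR : ∀ j, j + 2 < k → lift2 k FA j * lift2 k FA (j + 1) * lift2 k RA j =
      lift2 k RA (j + 1) * lift2 k FA j * lift2 k FA (j + 1))
    (c : S) {L M : Matrix (Fin N) (Fin N) A}
    (h0 : copies k FA FinvA L 0 * lift2 k RA 0 * copies k FA FinvA M 0 =
      c • (lift2 k RinvA 0 * copies k FA FinvA M 0 * copies k FA FinvA L 1))
    (j : ℕ) (hj : j + 1 < k) :
    copies k FA FinvA L j * lift2 k RA j * copies k FA FinvA M j =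
      c • (lift2 k RinvA j * copies k FA FinvA M j * copies k FA FinvA L (j + 1)) := by
  induction j with
  | zero => exact h0
  | succ j ih =>
    exact copies_mul_lift2_mul_copies_succ hFc hFFi hFiF hRRi hRiR (hYB j (by omega))
      (hFR j (by omega)) c (ih (by omega))

theorem liftV_mul_RupProd_mul_copiesProd (hRc : ∀ a b c, Commute (RA a b) c)
    (hRic : ∀ a b c, Commute (RinvA a b) c) (c : S) {L M : Matrix (Fin N) (Fin N) A}
    (hrel : ∀ j, j + 1 < k → copies k FA FinvA L j * lift2 k RA j * copies k FA FinvA M j =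
      c • (lift2 k RinvA j * copies k FA FinvA M j * copies k FA FinvA L (j + 1)))
    (q : ℕ) (hq : q + 1 < k) :
    liftV k L 0 * RupProd k RA q * copiesProd k FA FinvA M q =
      c ^ (q + 1) •
        (RupProd k RinvA q * copiesProd k FA FinvA M q * copies k FA FinvA L (q + 1)) := by
  induction q with
  | zero => rw [zero_add, pow_one]; exact hrel 0 hq
  | succ q ih =>
    have hP : Commute (copiesProd k FA FinvA M q) (lift2 k RA (q + 1)) :=
      commute_copiesProd_lift2 hRc M q.lt_succ_self
    have hPi : Commute (copiesProd k FA FinvA M q) (lift2 k RinvA (q + 1)) :=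
      commute_copiesProd_lift2 hRic M q.lt_succ_self
    calc liftV k L 0 * (RupProd k RA q * lift2 k RA (q + 1)) *
          (copiesProd k FA FinvA M q * copies k FA FinvA M (q + 1))
        = liftV k L 0 * RupProd k RA q * copiesProd k FA FinvA M q *
            (lift2 k RA (q + 1) * copies k FA FinvA M (q + 1)) := by
          simp only [mul_assoc, hP.left_comm]
      _ = c ^ (q + 1) • (RupProd k RinvA q * copiesProd k FA FinvA M q *
            (copies k FA FinvA L (q + 1) * lift2 k RA (q + 1) * copies k FA FinvA M (q + 1))) := by
          rw [ih (by omega), smul_mul_assoc]; simp only [mul_assoc]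
      _ = c ^ (q + 2) • (RupProd k RinvA q * lift2 k RinvA (q + 1) *
            (copiesProd k FA FinvA M q * copies k FA FinvA M (q + 1)) *
            copies k FA FinvA L (q + 2)) := by
          rw [hrel (q + 1) hq, mul_smul_comm, smul_smul, ← pow_succ]
          simp only [mul_assoc, hPi.left_comm]

end Relation

theorem bd_algebra_action_iterated_general (N : ℕ)
    (R Rinv F Finv : Matrix (Fin N × Fin N) (Fin N × Fin N) ℂ)
    (hYBF : up12 F * up23 F * up12 F = up23 F * up12 F * up23 F)
    (hRinv : R * Rinv = 1 ∧ Rinv * R = 1)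
    (hFinv : F * Finv = 1 ∧ Finv * F = 1)
    (hcomp : up12 R * up23 F * up12 F = up23 F * up12 F * up23 R
      ∧ up12 F * up23 F * up12 R = up23 R * up12 F * up23 F)
    (A : Type) [Ring A] [Algebra ℂ A] (η : ℂ)
    (L M : Matrix (Fin N) (Fin N) A)
    (hOFP : R.map (algebraMap ℂ A) * lift1 L * R.map (algebraMap ℂ A) * lift1 M
        = algebraMap ℂ A η
            • (lift1 M * (F.map (algebraMap ℂ A) * lift1 L * Finv.map (algebraMap ℂ A)))) :
    ∀ p : ℕ, 1 ≤ p →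
      liftV (p + 1) L 0 * RupProd (p + 1) (R.map (algebraMap ℂ A)) (p - 1)
          * copiesProd (p + 1) (F.map (algebraMap ℂ A)) (Finv.map (algebraMap ℂ A)) M (p - 1)
        = algebraMap ℂ A (η ^ p)
            • (RupProd (p + 1) (Rinv.map (algebraMap ℂ A)) (p - 1)
              * copiesProd (p + 1) (F.map (algebraMap ℂ A)) (Finv.map (algebraMap ℂ A)) M (p - 1)
              * copies (p + 1) (F.map (algebraMap ℂ A)) (Finv.map (algebraMap ℂ A)) L p) := by
  intro p hp
  obtain ⟨q, rfl⟩ : ∃ q, p = q + 1 := ⟨p - 1, by omega⟩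
  have hcen (X : Matrix (Fin N × Fin N) (Fin N × Fin N) ℂ) :
      ∀ a b c, Commute (X.map (algebraMap ℂ A) a b) c :=
    fun _ _ => Algebra.commute_algebraMap_left _
  have hmap {X Y : Matrix (Fin N × Fin N) (Fin N × Fin N) ℂ} (h : X * Y = 1) :
      X.map (algebraMap ℂ A) * Y.map (algebraMap ℂ A) = 1 := by
    rw [← Matrix.map_mul, h, Matrix.map_one _ (map_zero _) (map_one _)]
  rw [algebraMap_smul] at hOFP
  have hrel := copies_mul_lift2_mul_copies (k := q + 2) (hcen F) (hmap hFinv.1) (hmap hFinv.2)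
    (hmap hRinv.1) (hmap hRinv.2) (fun _ hj => lift2_braid hj _ hYBF)
    (fun _ hj => lift2_braid hj _ hcomp.2) η
    (copies_mul_lift2_mul_copies_zero (by omega) (hmap hRinv.2) η hOFP)
  rw [Nat.add_sub_cancel, algebraMap_smul]
  exact liftV_mul_RupProd_mul_copiesProd (hcen R) (hcen Rinv) η hrel q (by omega)

/-- For the braided differential algebra over a quantum matrix algebra, the
action relation iterates to all homogeneous components:
`L₁ R_{1→p} M_{1̄}⋯M_{p̄} = η^p R⁻¹_{1→p} M_{1̄}⋯M_{p̄} L_{p+1‾}`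
in `Mat_{N^{p+1}}(A)`. -/
theorem bd_algebra_action_iterated (N : ℕ) (hN : 1 ≤ N)
    (R Rinv F Finv : Matrix (Fin N × Fin N) (Fin N × Fin N) ℂ)
    (hYBR : up12 R * up23 R * up12 R = up23 R * up12 R * up23 R)
    (hYBF : up12 F * up23 F * up12 F = up23 F * up12 F * up23 F)
    (hRinv : R * Rinv = 1 ∧ Rinv * R = 1)
    (hFinv : F * Finv = 1 ∧ Finv * F = 1)
    (hcomp : up12 R * up23 F * up12 F = up23 F * up12 F * up23 R
      ∧ up12 F * up23 F * up12 R = up23 R * up12 F * up23 F)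
    (A : Type) [Ring A] [Algebra ℂ A] (η : ℂ) (hη : η ≠ 0)
    (L M : Matrix (Fin N) (Fin N) A)
    (hQM : R.map (algebraMap ℂ A) * lift1 M
          * (F.map (algebraMap ℂ A) * lift1 M * Finv.map (algebraMap ℂ A))
        = lift1 M * (F.map (algebraMap ℂ A) * lift1 M * Finv.map (algebraMap ℂ A))
          * R.map (algebraMap ℂ A))
    (hRE : R.map (algebraMap ℂ A) * lift1 L * R.map (algebraMap ℂ A) * lift1 L
        = lift1 L * R.map (algebraMap ℂ A) * lift1 L * R.map (algebraMap ℂ A))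
    (hOFP : R.map (algebraMap ℂ A) * lift1 L * R.map (algebraMap ℂ A) * lift1 M
        = algebraMap ℂ A η
            • (lift1 M * (F.map (algebraMap ℂ A) * lift1 L * Finv.map (algebraMap ℂ A)))) :
    ∀ p : ℕ, 1 ≤ p →
      liftV (p + 1) L 0 * RupProd (p + 1) (R.map (algebraMap ℂ A)) (p - 1)
          * copiesProd (p + 1) (F.map (algebraMap ℂ A)) (Finv.map (algebraMap ℂ A)) M (p - 1)
        = algebraMap ℂ A (η ^ p)
            • (RupProd (p + 1) (Rinv.map (algebraMap ℂ A)) (p - 1)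
              * copiesProd (p + 1) (F.map (algebraMap ℂ A)) (Finv.map (algebraMap ℂ A)) M (p - 1)
              * copies (p + 1) (F.map (algebraMap ℂ A)) (Finv.map (algebraMap ℂ A)) L p) :=
  bd_algebra_action_iterated_general N R Rinv F Finv hYBF hRinv hFinv hcomp A η L M hOFP
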